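/- For every ω ∈ ℝ, ∫_ℝ sinc(x/4)⁴ · e^{−iωx} dx = 32π · (𝟙 ∗ 𝟙 ∗ 𝟙 ∗ 𝟙)(ω), where 𝟙 denotes the indicator function of the interval [−1/4, 1/4] and ∗ denotes convolution on ℝ with Lebesgue measure; in particular the left-hand side is real. -/

import Mathlib

open Real MeasureTheory

/-- The cardinal sine function: `sinc z = sin z / z` for `z ≠ 0`, `sinc 0 = 1`. -/
noncomputable def sinc (x : ℝ) : ℝ := if x = 0 then 1 else Real.sin x / x

/-- Convolution of two real functions on `ℝ` with respect to Lebesgue measure. -/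
noncomputable def conv (f g : ℝ → ℝ) : ℝ → ℝ := fun x => ∫ t, f t * g (x - t)

/-- The indicator function of the interval `[-1/4, 1/4]`. -/
noncomputable def ind : ℝ → ℝ := Set.indicator (Set.Icc (-(1/4) : ℝ) (1/4)) fun _ => 1

/-!
With the normalisation `𝓕 f ξ = ∫ e^{-2πixξ} f x dx`, the indicator of `[-1/4, 1/4]` has
Fourier transform `sinc (πξ/2) / 2`, so the four-fold convolution `B` has Fourier transform
`sinc (πξ/2)⁴ / 16`, which is integrable. `B` is continuous (already `ind ⋆ ind` is a tent
function), so Fourier inversion holds at every point, and the substitution `x = -2πξ` turns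
the inversion integral for `B ω` into the integral on the left divided by `32π`.
-/

open scoped FourierTransform Convolution

lemma sinc_eq_real_sinc : _root_.sinc = Real.sinc := rfl

namespace Real

lemma abs_sinc_le_inv_abs {x : ℝ} (hx : x ≠ 0) : |sinc x| ≤ |x|⁻¹ := by
  rw [sinc_of_ne_zero hx, abs_div, div_eq_mul_inv]
  exact mul_le_of_le_one_left (inv_nonneg.2 (abs_nonneg x)) (abs_sin_le_one x)

lemma sinc_sq_le_two_div_one_add_sq (x : ℝ) : sinc x ^ 2 ≤ 2 / (1 + x ^ 2) := by
  rw [le_div_iff₀ (by positivity), ← sq_abs]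
  rcases le_or_gt |x| 1 with hx | hx
  · have : |sinc x| ^ 2 ≤ 1 := pow_le_one₀ (abs_nonneg _) (abs_sinc_le_one x)
    nlinarith [sq_abs x, abs_nonneg x, sq_nonneg (sinc x)]
  · have h0 : x ≠ 0 := by rintro rfl; norm_num at hx
    have hsinc := abs_sinc_le_inv_abs h0
    have hs : |sinc x| * |x| ≤ 1 :=
      calc |sinc x| * |x| ≤ |x|⁻¹ * |x| := by gcongr
        _ = 1 := inv_mul_cancel₀ (abs_ne_zero.2 h0)
    nlinarith [sq_abs x, abs_nonneg (sinc x), mul_nonneg (abs_nonneg (sinc x)) (abs_nonneg x)]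

lemma integrable_sinc_pow {n : ℕ} (hn : 2 ≤ n) : Integrable (fun x => sinc x ^ n) := by
  refine ((integrable_inv_one_add_sq).const_mul 2).mono'
    (continuous_sinc.pow n).aestronglyMeasurable (Filter.Eventually.of_forall fun x => ?_)
  calc ‖sinc x ^ n‖ = |sinc x| ^ n := by rw [norm_pow, norm_eq_abs]
    _ ≤ |sinc x| ^ 2 := pow_le_pow_of_le_one (abs_nonneg _) (abs_sinc_le_one x) hn
    _ ≤ 2 * (1 + x ^ 2)⁻¹ := by rw [sq_abs, ← div_eq_mul_inv]; exact sinc_sq_le_two_div_one_add_sq x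

end Real

section Convolution

variable {f g : ℝ → ℝ}

lemma ofReal_conv_eq_convolution :
    (fun x => (conv f g x : ℂ)) =
      (fun x => (f x : ℂ)) ⋆[ContinuousLinearMap.mul ℂ ℂ] (fun x => (g x : ℂ)) := by
  ext x
  simp only [conv, convolution, ContinuousLinearMap.mul_apply', ← Complex.ofReal_mul]
  exact integral_ofReal.symm

lemma MeasureTheory.Integrable.conv (hf : Integrable f) (hg : Integrable g) :
    Integrable (conv f g) :=
  hf.integrable_convolution (ContinuousLinearMap.mul ℝ ℝ) hg

lemma HasCompactSupport.conv (hf : HasCompactSupport f) (hg : HasCompactSupport g) :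
    HasCompactSupport (conv f g) :=
  hf.convolution (ContinuousLinearMap.mul ℝ ℝ) hg

lemma Continuous.conv_of_hasCompactSupport (hf : Continuous f) (hcf : HasCompactSupport f)
    (hg : Integrable g) : Continuous (conv f g) :=
  hcf.continuous_convolution_left (ContinuousLinearMap.mul ℝ ℝ) hf hg.locallyIntegrable

lemma fourier_ofReal_conv (hf : Integrable f) (hg : Integrable g) (ξ : ℝ) :
    𝓕 (fun x => (conv f g x : ℂ)) ξ =
      𝓕 (fun x => (f x : ℂ)) ξ * 𝓕 (fun x => (g x : ℂ)) ξ := by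
  rw [ofReal_conv_eq_convolution]
  exact Real.fourier_mul_convolution_eq hf.ofReal hg.ofReal ξ

end Convolution

lemma fourier_indicator_Icc {a : ℝ} (ha : 0 ≤ a) (ξ : ℝ) :
    𝓕 (fun x => (((Set.Icc (-a) a).indicator (fun _ => (1 : ℝ)) x : ℝ) : ℂ)) ξ =
      ((2 * a * Real.sinc (2 * π * a * ξ) : ℝ) : ℂ) := by
  have h_interval : 𝓕 (fun x => (((Set.Icc (-a) a).indicator (fun _ => (1 : ℝ)) x : ℝ) : ℂ)) ξ =
      ∫ x in -a..a, Complex.exp ((-2 * π * ξ * Complex.I) * x) := by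
    rw [Real.fourier_real_eq_integral_exp_smul, intervalIntegral.integral_of_le (by linarith),
      ← integral_Icc_eq_integral_Ioc, ← integral_indicator measurableSet_Icc]
    congr 1 with x
    by_cases hx : x ∈ Set.Icc (-a) a <;> simp [hx]
    ring_nf
  rcases eq_or_ne ξ 0 with rfl | hξ
  · rw [h_interval]; simp; ring
  have hc : -2 * π * ξ * Complex.I ≠ 0 := by simp [hξ, Real.pi_ne_zero]
  rw [h_interval, integral_exp_mul_complex hc]
  rcases eq_or_ne a 0 with rfl | ha0
  · simp
  have harg : 2 * π * a * ξ ≠ 0 := by positivity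
  have ha' : (a : ℂ) ≠ 0 := by exact_mod_cast ha0
  have hξ' : (ξ : ℂ) ≠ 0 := by exact_mod_cast hξ
  rw [Real.sinc_of_ne_zero harg]
  push_cast
  rw [show -2 * π * ξ * Complex.I * a = (-(2 * π * a * ξ) : ℂ) * Complex.I by ring,
    show -2 * π * ξ * Complex.I * -a = ((2 * π * a * ξ) : ℂ) * Complex.I by ring,
    Complex.exp_mul_I, Complex.exp_mul_I, Complex.cos_neg, Complex.sin_neg]
  field_simp
  ring

lemma conv_indicator_Icc (a b c d x : ℝ) :
    conv ((Set.Icc a b).indicator fun _ => 1) ((Set.Icc c d).indicator fun _ => 1) x =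
      max (min b (x - c) - max a (x - d)) 0 := by
  have hmem : ∀ t, x - t ∈ Set.Icc c d ↔ t ∈ Set.Icc (x - d) (x - c) := fun t => by
    simp only [Set.mem_Icc]; constructor <;> rintro ⟨h₁, h₂⟩ <;> constructor <;> linarith
  have hprod : (fun t => (Set.Icc a b).indicator (fun _ => (1 : ℝ)) t *
      (Set.Icc c d).indicator (fun _ => 1) (x - t)) =
      (Set.Icc a b ∩ Set.Icc (x - d) (x - c)).indicator fun _ => 1 := by
    ext t
    simp only [Set.indicator_apply, hmem, Set.mem_inter_iff]
    split_ifs <;> simp_all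
  rw [conv, hprod, integral_indicator_const _ (measurableSet_Icc.inter measurableSet_Icc),
    Set.Icc_inter_Icc, Real.volume_real_Icc, smul_eq_mul, mul_one]

lemma continuous_conv_indicator_Icc (a b c d : ℝ) :
    Continuous
      (conv ((Set.Icc a b).indicator fun _ => 1) ((Set.Icc c d).indicator fun _ => 1)) := by
  simp_rw [funext (conv_indicator_Icc a b c d)]
  fun_prop

lemma integrable_ind : Integrable ind :=
  (integrable_indicator_iff measurableSet_Icc).2 (integrableOn_const measure_Icc_lt_top.ne)

lemma hasCompactSupport_ind : HasCompactSupport ind :=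
  HasCompactSupport.intro isCompact_Icc fun _ hx => Set.indicator_of_notMem hx _

lemma fourier_ind (ξ : ℝ) :
    𝓕 (fun x => (ind x : ℂ)) ξ = ((Real.sinc (π * ξ / 2) / 2 : ℝ) : ℂ) := by
  rw [ind, fourier_indicator_Icc (by norm_num), show 2 * π * (1 / 4) * ξ = π * ξ / 2 by ring]
  push_cast
  ring

lemma continuous_conv_ind_ind_ind_ind : Continuous (conv (conv (conv ind ind) ind) ind) := by
  have hc₂ : HasCompactSupport (conv ind ind) := hasCompactSupport_ind.conv hasCompactSupport_ind
  exact ((continuous_conv_indicator_Icc _ _ _ _).conv_of_hasCompactSupport hc₂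
    integrable_ind).conv_of_hasCompactSupport (hc₂.conv hasCompactSupport_ind) integrable_ind

lemma integrable_conv_ind_ind_ind_ind : Integrable (conv (conv (conv ind ind) ind) ind) :=
  ((integrable_ind.conv integrable_ind).conv integrable_ind).conv integrable_ind

lemma fourier_conv_ind_ind_ind_ind (ξ : ℝ) :
    𝓕 (fun x => (conv (conv (conv ind ind) ind) ind x : ℂ)) ξ =
      ((Real.sinc (π * ξ / 2) ^ 4 / 16 : ℝ) : ℂ) := by
  have h₂ := integrable_ind.conv integrable_ind
  rw [fourier_ofReal_conv (h₂.conv integrable_ind) integrable_ind,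
    fourier_ofReal_conv h₂ integrable_ind, fourier_ofReal_conv integrable_ind integrable_ind,
    fourier_ind]
  push_cast
  ring

lemma integrable_fourier_conv_ind_ind_ind_ind :
    Integrable (𝓕 (fun x => (conv (conv (conv ind ind) ind) ind x : ℂ))) := by
  rw [funext fourier_conv_ind_ind_ind_ind]
  refine Integrable.ofReal (Integrable.div_const ?_ _)
  simpa only [mul_div_right_comm π] using
    (integrable_comp_mul_left_iff (fun x => Real.sinc x ^ 4) (by positivity : π / 2 ≠ 0)).2
      (Real.integrable_sinc_pow (by norm_num))

theorem stmt_16 (ω : ℝ) :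
    ∫ x : ℝ, (↑(_root_.sinc (x / 4) ^ 4) : ℂ) * Complex.exp (-(Complex.I * ω * x)) =
      ((32 * π * conv (conv (conv ind ind) ind) ind ω : ℝ) : ℂ) := by
  set B := conv (conv (conv ind ind) ind) ind
  set Φ : ℝ → ℂ := fun x => (↑(_root_.sinc (x / 4) ^ 4) : ℂ) * Complex.exp (-(Complex.I * ω * x))
  have hinv : 𝓕⁻ (𝓕 (fun x => (B x : ℂ))) ω = B ω :=
    integrable_conv_ind_ind_ind_ind.ofReal.fourierInv_fourier_eq
      integrable_fourier_conv_ind_ind_ind_ind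
      (Complex.continuous_ofReal.comp continuous_conv_ind_ind_ind_ind).continuousAt
  have hΦ : ∀ v, Φ (-(2 * π) * v) =
      16 * (Complex.exp (↑(-2 * π * v * -ω) * Complex.I) • 𝓕 (fun x => (B x : ℂ)) v) := by
    intro v
    simp only [Φ, sinc_eq_real_sinc, smul_eq_mul]
    rw [fourier_conv_ind_ind_ind_ind, show -(2 * π) * v / 4 = -(π * v / 2) by ring,
      Real.sinc_neg]
    push_cast
    ring_nf
  calc ∫ x, Φ x = 2 * π * ∫ v, Φ (-(2 * π) * v) := by
        rw [Measure.integral_comp_mul_left, abs_inv, abs_neg, abs_of_pos (by positivity),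
          Complex.real_smul, ← mul_assoc]
        push_cast
        field_simp
    _ = 2 * π * (16 * 𝓕⁻ (𝓕 (fun x => (B x : ℂ))) ω) := by
        congr 1
        rw [Real.fourierInv_eq_fourier_neg, Real.fourier_real_eq_integral_exp_smul,
          ← integral_const_mul]
        simp_rw [hΦ]
    _ = ((32 * π * B ω : ℝ) : ℂ) := by
        rw [hinv]
        push_cast
        ring
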